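/- arXiv:0912.1266 — 3 statements merged into one kernel-verified Lean document; each statement's English description precedes it below -/
import Mathlib

section
/- Let S be a semigroup, let T be a subsemigroup of S with finite Green index, and let {H_i : i ∈ I} be the ℋ^T-classes contained in S \ T. Then S is finitely generated if and only if T is finitely generated; and in that case every relative Schützenberger group Γ(H_i) = Stab(H_i)/γ(H_i), i ∈ I, is finitely generated as well. -/
/-!
Fix representatives `F` of the finitely many `ℋ^T`-classes in `S \ T`; every `s ∉ T` lies in
`cT¹` and in `T¹c` for some `c ∈ F`. Hence generators of `T` together with `F` generate `S`.

Conversely, let `A` generate `S`. Writing the elements of `A ∪ FA` outside `T` as `μc` with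
`μ ∈ T¹` and `c ∈ F`, the set `U ∪ U¹F` is closed under right multiplication by `A`, where `U ≤ T`
is generated by `(A ∪ FA) ∩ T` and the multipliers `μ`; so `S = U ∪ U¹F`. Symmetrically, with `G`
the generators of `U`, write the elements of `GF` outside `T` as `cρ` with `c ∈ F`, `ρ ∈ T¹` and
`cρ ℛ^T c`. Then `V ∪ {cρ : c ∈ F, ρ ∈ V¹, cρ ℛ^T c}` is closed under left multiplication by `U`,
where `V ≤ T` is generated by `G`, `GF ∩ T` and the multipliers `ρ`. This set contains `U¹F`,
hence all of `S`, and its elements `ℛ^T`-related to some `c ∈ F` lie outside `T`; so `T = V`.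

For the Schützenberger group of `H ∋ a` we run Schreier's argument on the `ℛ^T`-class of `a`,
which consists of finitely many `ℋ^T`-classes. Choose connectors `a θ_c = c`, `c θ'_c = a` in
`T¹` for their representatives `c`. If `τ = b₁ ⋯ bₙ ∈ Stab(H)` with the `bᵢ` among the generators
of `T`, every prefix `a b₁ ⋯ bₖ` stays in this `ℛ^T`-class, in the `ℋ^T`-class of `cₖ` say, and
`τ` acts on `H` as the product of the Schreier generators `θ_{cₖ₋₁} bₖ θ'_{cₖ}`, which lie in
`Stab(H)` by Green's lemma.
-/

namespace GreenIndexPaper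

variable {S : Type*} [Semigroup S]

/-- The subset `u·T¹ = {u} ∪ uT` of `S` (equivalently, `u T¹` computed in `S¹`). -/
def rset (T : Subsemigroup S) (u : S) : Set S := insert u {x | ∃ t ∈ T, x = u * t}

/-- The subset `T¹·u = {u} ∪ Tu` of `S`. -/
def lset (T : Subsemigroup S) (u : S) : Set S := insert u {x | ∃ t ∈ T, x = t * u}

/-- The relative Green relation `ℛ^T`. -/
def RrelT (T : Subsemigroup S) (u v : S) : Prop := rset T u = rset T v

/-- The relative Green relation `ℒ^T`. -/
def LrelT (T : Subsemigroup S) (u v : S) : Prop := lset T u = lset T v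

/-- The relative Green relation `ℋ^T = ℛ^T ∩ ℒ^T`. -/
def HrelT (T : Subsemigroup S) (u v : S) : Prop := RrelT T u v ∧ LrelT T u v

/-- `H` is an `ℋ^T`-class of `S`. -/
def IsHClassIn (T : Subsemigroup S) (H : Set S) : Prop := ∃ a : S, H = {x | HrelT T a x}

/-- `T` has finite Green index in `S`: the complement `S \ T` is a union of finitely many
`ℋ^T`-classes. -/
def FiniteGreenIndex (T : Subsemigroup S) : Prop :=
  ∃ F : Finset S, (∀ c ∈ F, c ∉ T) ∧ ∀ s : S, s ∉ T → ∃ c ∈ F, HrelT T s c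

/-- The subset `T¹ = T ∪ {1}` of `S¹ = WithOne S`. -/
def T1 (T : Subsemigroup S) : Set (WithOne S) := insert 1 ((↑) '' (T : Set S))

/-- The subset `H·t` of `S¹`, for `H ⊆ S` and `t ∈ S¹`. -/
def setMulR (H : Set S) (t : WithOne S) : Set (WithOne S) :=
  {x | ∃ h ∈ H, x = (h : WithOne S) * t}

/-- The stabilizer `Stab(H) = {t ∈ T¹ : Ht = H}`, as a subset of `S¹`. -/
def stabSet (T : Subsemigroup S) (H : Set S) : Set (WithOne S) :=
  {t | t ∈ T1 T ∧ setMulR H t = (↑) '' H}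

theorem one_mem_stabSet (T : Subsemigroup S) (H : Set S) : (1 : WithOne S) ∈ stabSet T H := by
  refine ⟨Set.mem_insert _ _, ?_⟩
  ext x
  constructor
  · rintro ⟨h, hh, rfl⟩
    exact ⟨h, hh, (mul_one _).symm⟩
  · rintro ⟨h, hh, rfl⟩
    exact ⟨h, hh, (mul_one _).symm⟩

theorem mul_mem_stabSet {T : Subsemigroup S} {H : Set S} {s t : WithOne S}
    (hs : s ∈ stabSet T H) (ht : t ∈ stabSet T H) : s * t ∈ stabSet T H := by
  obtain ⟨hsT, hsH⟩ := hs
  obtain ⟨htT, htH⟩ := ht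
  constructor
  · rcases hsT with rfl | ⟨s', hs', rfl⟩
    · rwa [one_mul]
    · rcases htT with rfl | ⟨t', ht', rfl⟩
      · rw [mul_one]; exact Or.inr ⟨s', hs', rfl⟩
      · exact Or.inr ⟨s' * t', T.mul_mem hs' ht', rfl⟩
  · ext x
    constructor
    · rintro ⟨h, hh, rfl⟩
      have h1 : (h : WithOne S) * s ∈ setMulR H s := ⟨h, hh, rfl⟩
      rw [hsH] at h1
      obtain ⟨g, hg, hgs⟩ := h1
      have h2 : (g : WithOne S) * t ∈ setMulR H t := ⟨g, hg, rfl⟩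
      rw [htH] at h2
      obtain ⟨k, hk, hkt⟩ := h2
      refine ⟨k, hk, ?_⟩
      rw [hkt, hgs, ← mul_assoc]
    · rintro ⟨k, hk, rfl⟩
      have h2 : ((k : WithOne S)) ∈ setMulR H t := by
        rw [htH]; exact ⟨k, hk, rfl⟩
      obtain ⟨g, hg, hgt⟩ := h2
      have h1 : ((g : WithOne S)) ∈ setMulR H s := by
        rw [hsH]; exact ⟨g, hg, rfl⟩
      obtain ⟨h, hh, hhs⟩ := h1
      exact ⟨h, hh, by rw [hgt, hhs, mul_assoc]⟩

/-- The stabilizer `Stab(H)` as a submonoid of `S¹`. -/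
def stabSubmonoid (T : Subsemigroup S) (H : Set S) : Submonoid (WithOne S) where
  carrier := stabSet T H
  one_mem' := one_mem_stabSet T H
  mul_mem' := mul_mem_stabSet

/-- The Schützenberger congruence `γ(H)` on `Stab(H)`. -/
def gammaCon (T : Subsemigroup S) (H : Set S) : Con (stabSubmonoid T H) where
  r x y := ∀ h ∈ H, (h : WithOne S) * (x : WithOne S) = (h : WithOne S) * (y : WithOne S)
  iseqv := ⟨fun _ _ _ => rfl, fun hxy h hh => (hxy h hh).symm,
    fun h1 h2 h hh => (h1 h hh).trans (h2 h hh)⟩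
  mul' := by
    rintro ⟨w, hwT, hwH⟩ ⟨x, hxT, hxH⟩ ⟨y, hyT, hyH⟩ ⟨z, hzT, hzH⟩ hwx hyz h hh
    have h1 : (h : WithOne S) * w ∈ setMulR H w := ⟨h, hh, rfl⟩
    rw [hwH] at h1
    obtain ⟨g, hg, hgw⟩ := h1
    have key : (h : WithOne S) * (w * y) = (h : WithOne S) * (x * z) := by
      calc (h : WithOne S) * (w * y) = ((h : WithOne S) * w) * y := by rw [mul_assoc]
        _ = (g : WithOne S) * y := by rw [hgw]
        _ = (g : WithOne S) * z := hyz g hg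
        _ = ((h : WithOne S) * w) * z := by rw [hgw]
        _ = ((h : WithOne S) * x) * z := by rw [hwx h hh]
        _ = (h : WithOne S) * (x * z) := by rw [mul_assoc]
    exact key

/-- The relative Schützenberger group `Γ(H) = Stab(H)/γ(H)`. -/
abbrev SchGroup (T : Subsemigroup S) (H : Set S) := (gammaCon T H).Quotient

/-- Representatives `h_i` for `i ∈ I¹ = I ∪ {1}`, with `h_1 = 1 ∈ S¹`. -/
def repOne {ι : Type*} (h : ι → S) : Option ι → WithOne S :=
  fun o => o.elim 1 fun i => (h i : WithOne S)

/-- `S` is finitely presented as a semigroup. -/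
def SemigroupFP (S : Type*) [Semigroup S] : Prop :=
  ∃ (n : ℕ) (π : FreeSemigroup (Fin n) →ₙ* S), Function.Surjective π ∧
    ∃ R : Finset (FreeSemigroup (Fin n) × FreeSemigroup (Fin n)),
      ∀ u v, (conGen fun x y => (x, y) ∈ R) u v ↔ π u = π v

/-- `M` is finitely presented as a monoid. -/
def MonoidFP (M : Type*) [Monoid M] : Prop :=
  ∃ (n : ℕ) (π : FreeMonoid (Fin n) →* M), Function.Surjective π ∧
    ∃ R : Finset (FreeMonoid (Fin n) × FreeMonoid (Fin n)),
      ∀ u v, (conGen fun x y => (x, y) ∈ R) u v ↔ π u = π v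

/-- A left ideal of a semigroup. -/
def IsLeftIdeal (L : Set S) : Prop := L.Nonempty ∧ ∀ s : S, ∀ x ∈ L, s * x ∈ L

/-- A right ideal of a semigroup. -/
def IsRightIdeal (R : Set S) : Prop := R.Nonempty ∧ ∀ s : S, ∀ x ∈ R, x * s ∈ R

/-- Residual finiteness: distinct elements can be separated by a homomorphism
into a finite semigroup. -/
def ResiduallyFiniteMul (M : Type*) [Mul M] : Prop :=
  ∀ x y : M, x ≠ y → ∃ (F : Type) (_ : Semigroup F) (_ : Finite F) (φ : M →ₙ* F), φ x ≠ φ y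

/-- `T` has finite Green index inside the subsemigroup `Ssub` of the ambient semigroup:
`Ssub \ T` is a union of finitely many `ℋ^T`-classes. -/
def FiniteGreenIndexIn (Ssub T : Subsemigroup S) : Prop :=
  ∃ F : Finset S, (∀ c ∈ F, c ∈ Ssub ∧ c ∉ T) ∧ ∀ s ∈ Ssub, s ∉ T → ∃ c ∈ F, HrelT T s c

/-- A subsemigroup is a group under the induced operation. -/
def IsGroupSub (T : Subsemigroup S) : Prop :=
  ∃ e ∈ T, (∀ t ∈ T, e * t = t ∧ t * e = t) ∧ ∀ t ∈ T, ∃ t' ∈ T, t * t' = e ∧ t' * t = e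

/-- The (out-)ball of radius `n`: elements expressible as a product of at most `n`
(and at least one) elements of `A`. -/
def ball (A : Finset S) (n : ℕ) : Set S :=
  {s | ∃ l : List S, l ≠ [] ∧ l.length ≤ n ∧ (∀ x ∈ l, x ∈ A) ∧
    (l.map ((↑) : S → WithOne S)).prod = (s : WithOne S)}

/-- The growth function of a semigroup with respect to a finite set `A`. -/
noncomputable def growth (A : Finset S) (n : ℕ) : ℕ := (ball A n).ncard

open Subsemigroup (closure closure_le closure_mono subset_closure)

theorem exists_list_of_mem_closure {M : Type*} [Monoid M] {s : Set M} {x : M}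
    (hx : x ∈ closure s) : ∃ l : List M, l ≠ [] ∧ (∀ y ∈ l, y ∈ s) ∧ l.prod = x := by
  induction hx using Subsemigroup.closure_induction with
  | mem x hx => exact ⟨[x], List.cons_ne_nil _ _, by simpa using hx, List.prod_singleton⟩
  | mul x y _ _ ihx ihy =>
    obtain ⟨l₁, hl₁, hl₁s, rfl⟩ := ihx
    obtain ⟨l₂, -, hl₂s, rfl⟩ := ihy
    refine ⟨l₁ ++ l₂, by simp [hl₁], fun z hz => ?_, List.prod_append⟩
    exact (List.mem_append.mp hz).elim (hl₁s z) (hl₂s z)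

section ClosureInduction

variable {A W : Set S} {u w : S}

theorem mul_mem_of_mem_closure_right (hW : ∀ w ∈ W, ∀ a ∈ A, w * a ∈ W) (hw : w ∈ W)
    (hu : u ∈ closure A) : w * u ∈ W := by
  induction hu using Subsemigroup.closure_induction generalizing w with
  | mem a ha => exact hW w hw a ha
  | mul x y _ _ ihx ihy => exact mul_assoc w x y ▸ ihy (ihx hw)

theorem mul_mem_of_mem_closure_left (hW : ∀ a ∈ A, ∀ w ∈ W, a * w ∈ W) (hu : u ∈ closure A)
    (hw : w ∈ W) : u * w ∈ W := by
  induction hu using Subsemigroup.closure_induction generalizing w with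
  | mem a ha => exact hW a ha w hw
  | mul x y _ _ ihx ihy => exact (mul_assoc x y w).symm ▸ ihx (ihy hw)

theorem closure_subset_of_mul_mem (hA : A ⊆ W) (hW : ∀ w ∈ W, ∀ a ∈ A, w * a ∈ W) :
    (closure A : Set S) ⊆ W := fun _ hu => by
  induction hu using Subsemigroup.closure_induction with
  | mem a ha => exact hA ha
  | mul x y _ hy ihx _ => exact mul_mem_of_mem_closure_right hW ihx hy

end ClosureInduction

section RelativeIdeals

variable {U V : Subsemigroup S} {x y t : S}

theorem mem_rset_self (U : Subsemigroup S) (x : S) : x ∈ rset U x := Set.mem_insert _ _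

theorem mem_lset_self (U : Subsemigroup S) (x : S) : x ∈ lset U x := Set.mem_insert _ _

theorem mul_mem_rset (x : S) (ht : t ∈ U) : x * t ∈ rset U x := Or.inr ⟨t, ht, rfl⟩

theorem mul_mem_lset (x : S) (ht : t ∈ U) : t * x ∈ lset U x := Or.inr ⟨t, ht, rfl⟩

theorem rset_mono (h : U ≤ V) (x : S) : rset U x ⊆ rset V x :=
  Set.insert_subset_insert fun _ ⟨t, ht, e⟩ => ⟨t, h ht, e⟩

theorem lset_mono (h : U ≤ V) (x : S) : lset U x ⊆ lset V x :=
  Set.insert_subset_insert fun _ ⟨t, ht, e⟩ => ⟨t, h ht, e⟩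

theorem rset_subset_of_mem (hy : y ∈ rset U x) : rset U y ⊆ rset U x := by
  rcases hy with rfl | ⟨t, ht, rfl⟩
  · exact subset_rfl
  rintro _ (rfl | ⟨t', ht', rfl⟩)
  · exact mul_mem_rset x ht
  · exact Or.inr ⟨t * t', U.mul_mem ht ht', mul_assoc x t t'⟩

theorem lset_subset_of_mem (hy : y ∈ lset U x) : lset U y ⊆ lset U x := by
  rcases hy with rfl | ⟨t, ht, rfl⟩
  · exact subset_rfl
  rintro _ (rfl | ⟨t', ht', rfl⟩)
  · exact mul_mem_lset x ht
  · exact Or.inr ⟨t' * t, U.mul_mem ht' ht, (mul_assoc t' t x).symm⟩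

theorem rset_subset (hx : x ∈ U) : rset U x ⊆ U := by
  rintro _ (rfl | ⟨t, ht, rfl⟩)
  exacts [hx, U.mul_mem hx ht]

theorem lset_subset (hx : x ∈ U) : lset U x ⊆ U := by
  rintro _ (rfl | ⟨t, ht, rfl⟩)
  exacts [hx, U.mul_mem ht hx]

theorem mul_mem_rset_mul (z : S) (hy : y ∈ rset U x) : z * y ∈ rset U (z * x) := by
  rcases hy with rfl | ⟨t, ht, rfl⟩
  exacts [mem_rset_self U _, Or.inr ⟨t, ht, (mul_assoc z x t).symm⟩]

theorem mul_mem_lset_mul (z : S) (hy : y ∈ lset U x) : y * z ∈ lset U (x * z) := by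
  rcases hy with rfl | ⟨t, ht, rfl⟩
  exacts [mem_lset_self U _, Or.inr ⟨t, ht, mul_assoc t x z⟩]

end RelativeIdeals

section RelativeGreen

variable {U : Subsemigroup S} {x y z : S}

theorem RrelT.symm (h : RrelT U x y) : RrelT U y x := Eq.symm h

theorem RrelT.trans (h : RrelT U x y) (h' : RrelT U y z) : RrelT U x z := Eq.trans h h'

theorem LrelT.symm (h : LrelT U x y) : LrelT U y x := Eq.symm h

theorem LrelT.trans (h : LrelT U x y) (h' : LrelT U y z) : LrelT U x z := Eq.trans h h'

theorem HrelT.refl (U : Subsemigroup S) (x : S) : HrelT U x x := ⟨rfl, rfl⟩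

theorem HrelT.symm (h : HrelT U x y) : HrelT U y x := ⟨h.1.symm, h.2.symm⟩

theorem HrelT.trans (h : HrelT U x y) (h' : HrelT U y z) : HrelT U x z :=
  ⟨h.1.trans h'.1, h.2.trans h'.2⟩

theorem rrelT_iff : RrelT U x y ↔ x ∈ rset U y ∧ y ∈ rset U x :=
  ⟨fun h => ⟨(h : rset U x = rset U y) ▸ mem_rset_self U x, h ▸ mem_rset_self U y⟩,
    fun ⟨hx, hy⟩ => (rset_subset_of_mem hx).antisymm (rset_subset_of_mem hy)⟩

theorem lrelT_iff : LrelT U x y ↔ x ∈ lset U y ∧ y ∈ lset U x :=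
  ⟨fun h => ⟨(h : lset U x = lset U y) ▸ mem_lset_self U x, h ▸ mem_lset_self U y⟩,
    fun ⟨hx, hy⟩ => (lset_subset_of_mem hx).antisymm (lset_subset_of_mem hy)⟩

theorem RrelT.mul_left (h : RrelT U x y) (z : S) : RrelT U (z * x) (z * y) :=
  rrelT_iff.mpr ⟨mul_mem_rset_mul z (rrelT_iff.mp h).1, mul_mem_rset_mul z (rrelT_iff.mp h).2⟩

theorem RrelT.mem_iff (h : RrelT U x y) : x ∈ U ↔ y ∈ U :=
  ⟨fun hx => rset_subset hx (rrelT_iff.mp h).2, fun hy => rset_subset hy (rrelT_iff.mp h).1⟩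

theorem rrelT_mul_of_rrelT_mul_mul {s t : S} (hs : s ∈ U) (ht : t ∈ U)
    (h : RrelT U (x * (s * t)) x) : RrelT U (x * s) x :=
  have hst : x * (s * t) ∈ rset U (x * s) := mul_assoc x s t ▸ mul_mem_rset (x * s) ht
  rrelT_iff.mpr ⟨mul_mem_rset x hs, rset_subset_of_mem hst (rrelT_iff.mp h).2⟩

end RelativeGreen

section AdjoinedIdentity

variable {U : Subsemigroup S} {x y z : S} {θ η u v : WithOne S}

theorem one_mem_T1 (U : Subsemigroup S) : (1 : WithOne S) ∈ T1 U := Set.mem_insert _ _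

theorem coe_mem_T1 {t : S} (ht : t ∈ U) : (t : WithOne S) ∈ T1 U := Or.inr ⟨t, ht, rfl⟩

theorem mul_mem_T1 (hθ : θ ∈ T1 U) (hη : η ∈ T1 U) : θ * η ∈ T1 U := by
  rcases hθ with rfl | ⟨s, hs, rfl⟩
  · rwa [one_mul]
  rcases hη with rfl | ⟨t, ht, rfl⟩
  · exact (mul_one (s : WithOne S)).symm ▸ coe_mem_T1 hs
  · exact WithOne.coe_mul s t ▸ coe_mem_T1 (U.mul_mem hs ht)

theorem exists_coe_eq_mul_T1 (hθ : θ ∈ T1 U) (x : S) :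
    ∃ y ∈ rset U x, (y : WithOne S) = x * θ := by
  rcases hθ with rfl | ⟨t, ht, rfl⟩
  exacts [⟨x, mem_rset_self U x, (mul_one _).symm⟩, ⟨x * t, mul_mem_rset x ht, WithOne.coe_mul x t⟩]

theorem mem_rset_iff_coe : y ∈ rset U x ↔ ∃ θ ∈ T1 U, (y : WithOne S) = x * θ := by
  refine ⟨?_, fun ⟨θ, hθ, e⟩ => ?_⟩
  · rintro (rfl | ⟨t, ht, rfl⟩)
    exacts [⟨1, one_mem_T1 U, (mul_one _).symm⟩, ⟨t, coe_mem_T1 ht, WithOne.coe_mul x t⟩]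
  · obtain ⟨y', hy', e'⟩ := exists_coe_eq_mul_T1 hθ x
    rwa [WithOne.coe_injective (e.trans e'.symm)]

theorem mem_lset_iff_coe : y ∈ lset U x ↔ ∃ θ ∈ T1 U, (y : WithOne S) = θ * x := by
  refine ⟨?_, ?_⟩
  · rintro (rfl | ⟨t, ht, rfl⟩)
    exacts [⟨1, one_mem_T1 U, (one_mul _).symm⟩, ⟨t, coe_mem_T1 ht, WithOne.coe_mul t x⟩]
  · rintro ⟨θ, (rfl | ⟨t, ht, rfl⟩), e⟩
    · rw [one_mul, WithOne.coe_inj] at e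
      exact e ▸ mem_lset_self U x
    · rw [← WithOne.coe_mul, WithOne.coe_inj] at e
      exact e ▸ mul_mem_lset x ht

theorem coe_mul_eq_of_mem_lset {c : S} (hz : z ∈ lset U c)
    (h : (c : WithOne S) * u = c * v) : (z : WithOne S) * u = z * v := by
  obtain ⟨ν, -, e⟩ := mem_lset_iff_coe.mp hz
  rw [e, mul_assoc, h, mul_assoc]

theorem coe_mul_eq_self_of_mem_lset {c : S} (hz : z ∈ lset U c) (h : (c : WithOne S) * u = c) :
    (z : WithOne S) * u = z := by
  simpa using coe_mul_eq_of_mem_lset hz (v := 1) (by rwa [mul_one])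

/-- A relative form of Green's lemma. -/
theorem exists_rrelT_lrelT_of_coe_mul {x' : S} (hθ : θ ∈ T1 U) (hL : LrelT U y x)
    (hx : (x' : WithOne S) = x * θ) (hR : RrelT U x' x) :
    ∃ y' : S, (y' : WithOne S) = y * θ ∧ RrelT U y' y ∧ LrelT U y' x' := by
  obtain ⟨y', hy', e⟩ := exists_coe_eq_mul_T1 hθ y
  obtain ⟨hyx, hxy⟩ := lrelT_iff.mp hL
  obtain ⟨σ, hσ, hσe⟩ := mem_rset_iff_coe.mp (rrelT_iff.mp hR).2
  obtain ⟨ν, hν, hνe⟩ := mem_lset_iff_coe.mp hyx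
  obtain ⟨ν', hν', hν'e⟩ := mem_lset_iff_coe.mp hxy
  have hyσ : (y : WithOne S) = y' * σ := by
    rw [e, mul_assoc, coe_mul_eq_self_of_mem_lset hyx]
    rw [← mul_assoc, ← hx, ← hσe]
  refine ⟨y', e, rrelT_iff.mpr ⟨hy', mem_rset_iff_coe.mpr ⟨σ, hσ, hyσ⟩⟩, lrelT_iff.mpr ⟨?_, ?_⟩⟩
  · exact mem_lset_iff_coe.mpr ⟨ν, hν, by rw [e, hνe, hx, mul_assoc]⟩
  · exact mem_lset_iff_coe.mpr ⟨ν', hν', by rw [hx, hν'e, e, mul_assoc]⟩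

end AdjoinedIdentity

section Covers

variable {T U : Subsemigroup S} {F : Finset S} {s w y : S}

def leftCover (U : Subsemigroup S) (F : Finset S) : Set S :=
  {s | s ∈ U ∨ ∃ h ∈ F, s ∈ lset U h}

def rightCover (T U : Subsemigroup S) (F : Finset S) : Set S :=
  {s | s ∈ U ∨ ∃ c ∈ F, s ∈ rset U c ∧ RrelT T s c}

theorem leftCover_mono (F : Finset S) : Monotone fun U : Subsemigroup S => leftCover U F :=
  fun _ _ h _ hs => hs.imp (@h _) fun ⟨c, hc, hs⟩ => ⟨c, hc, lset_mono h c hs⟩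

theorem rightCover_mono (T : Subsemigroup S) (F : Finset S) :
    Monotone fun U : Subsemigroup S => rightCover T U F :=
  fun _ _ h _ hs => hs.imp (@h _) fun ⟨c, hc, hs, hR⟩ => ⟨c, hc, rset_mono h c hs, hR⟩

theorem exists_finset_mem_leftCover (hF : ∀ s ∉ T, ∃ c ∈ F, HrelT T s c) (s : S) :
    ∃ K : Finset S, (K : Set S) ⊆ T ∧ s ∈ leftCover (closure (K : Set S)) F := by
  classical
  by_cases hs : s ∈ T
  · exact ⟨{s}, by simpa using hs, Or.inl (subset_closure (by simp))⟩
  obtain ⟨c, hc, hsc⟩ := hF s hs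
  rcases (lrelT_iff.mp hsc.2).1 with rfl | ⟨t, ht, rfl⟩
  · exact ⟨∅, by simp, Or.inr ⟨s, hc, mem_lset_self _ s⟩⟩
  · exact ⟨{t}, by simpa using ht, Or.inr ⟨c, hc, mul_mem_lset c (subset_closure (by simp))⟩⟩

theorem exists_finset_mem_rightCover (hF : ∀ s ∉ T, ∃ c ∈ F, HrelT T s c) (s : S) :
    ∃ K : Finset S, (K : Set S) ⊆ T ∧ s ∈ rightCover T (closure (K : Set S)) F := by
  classical
  by_cases hs : s ∈ T
  · exact ⟨{s}, by simpa using hs, Or.inl (subset_closure (by simp))⟩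
  obtain ⟨c, hc, hsc⟩ := hF s hs
  rcases (rrelT_iff.mp hsc.1).1 with rfl | ⟨t, ht, rfl⟩
  · exact ⟨∅, by simp, Or.inr ⟨s, hc, mem_rset_self _ s, hsc.1⟩⟩
  · exact ⟨{t}, by simpa using ht,
      Or.inr ⟨c, hc, mul_mem_rset c (subset_closure (by simp)), hsc.1⟩⟩

theorem exists_finset_forall_mem {A : Set S} {P : Subsemigroup S → Set S} (hP : Monotone P)
    (h : ∀ s, ∃ K : Finset S, (K : Set S) ⊆ A ∧ s ∈ P (closure (K : Set S))) (E : Finset S) :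
    ∃ K : Finset S, (K : Set S) ⊆ A ∧ ∀ σ ∈ E, σ ∈ P (closure (K : Set S)) := by
  classical
  induction E using Finset.induction_on with
  | empty => exact ⟨∅, by simp, by simp⟩
  | insert σ E _ ih =>
    obtain ⟨K, hKA, hK⟩ := ih
    obtain ⟨K', hK'A, hK'⟩ := h σ
    have hmono : ∀ L ⊆ K ∪ K', P (closure (L : Set S)) ⊆ P (closure ↑(K ∪ K')) :=
      fun L hL => hP (closure_mono (by exact_mod_cast hL))
    refine ⟨K ∪ K', by simp [hKA, hK'A], ?_⟩
    simp only [Finset.mem_insert, forall_eq_or_imp]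
    exact ⟨hmono K' Finset.subset_union_right hK',
      fun τ hτ => hmono K Finset.subset_union_left (hK τ hτ)⟩

theorem lset_subset_leftCover (hy : y ∈ leftCover U F) : lset U y ⊆ leftCover U F := by
  rcases hy with hy | ⟨h, hh, hy⟩
  · exact fun w hw => Or.inl (lset_subset hy hw)
  · exact fun w hw => Or.inr ⟨h, hh, lset_subset_of_mem hy hw⟩

theorem closure_subset_leftCover {A : Set S} (hA : A ⊆ leftCover U F)
    (hFA : ∀ h ∈ F, ∀ a ∈ A, h * a ∈ leftCover U F) : (closure A : Set S) ⊆ leftCover U F := by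
  refine closure_subset_of_mul_mem hA fun w hw a ha => ?_
  rcases hw with hw | ⟨h, hh, hw⟩
  · exact lset_subset_leftCover (hA ha) (mul_mem_lset a hw)
  · exact lset_subset_leftCover (hFA h hh a ha) (mul_mem_lset_mul a hw)

theorem mem_rightCover_of_mem_rset (hy : y ∈ rightCover T U F) (hw : w ∈ rset U y)
    (hwy : RrelT T w y) : w ∈ rightCover T U F := by
  rcases hy with hy | ⟨c, hc, hyc, hyR⟩
  · exact Or.inl (rset_subset hy hw)
  · exact Or.inr ⟨c, hc, rset_subset_of_mem hyc hw, hwy.trans hyR⟩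

theorem mul_mem_rightCover {G : Set S} (hGU : G ⊆ U)
    (hGF : ∀ g ∈ G, ∀ c ∈ F, g * c ∈ rightCover T U F) {u : S} (hu : u ∈ closure G)
    (hw : w ∈ rightCover T U F) : u * w ∈ rightCover T U F := by
  refine mul_mem_of_mem_closure_left (fun g hg w hw => ?_) hu hw
  rcases hw with hw | ⟨c, hc, hwc, hwR⟩
  · exact Or.inl (U.mul_mem (hGU hg) hw)
  · exact mem_rightCover_of_mem_rset (hGF g hg c hc) (mul_mem_rset_mul g hwc) (hwR.mul_left g)

theorem leftCover_subset_rightCover {G : Set S} (hGU : G ⊆ U)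
    (hGF : ∀ g ∈ G, ∀ c ∈ F, g * c ∈ rightCover T U F) :
    leftCover (closure G) F ⊆ rightCover T U F := by
  rintro s (hs | ⟨h, hh, hs⟩)
  · exact Or.inl (closure_le.mpr hGU hs)
  have hh' : h ∈ rightCover T U F := Or.inr ⟨h, hh, mem_rset_self U h, rfl⟩
  rcases hs with rfl | ⟨g, hg, rfl⟩
  exacts [hh', mul_mem_rightCover hGU hGF hg hh']

theorem mem_of_mem_rightCover (hFT : ∀ c ∈ F, c ∉ T) (hs : s ∈ rightCover T U F)
    (hsT : s ∈ T) : s ∈ U := by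
  rcases hs with hs | ⟨c, hc, -, hsc⟩
  exacts [hs, absurd (hsc.mem_iff.mp hsT) (hFT c hc)]

end Covers

open scoped Pointwise in
theorem exists_finset_closure_eq_of_closure_eq_top {T : Subsemigroup S} (hGI : FiniteGreenIndex T)
    {A : Finset S} (hA : closure (A : Set S) = ⊤) :
    ∃ B : Finset S, (B : Set S) ⊆ T ∧ closure (B : Set S) = T := by
  classical
  obtain ⟨F, hFT, hF⟩ := hGI
  obtain ⟨G, hGT, hG⟩ := exists_finset_forall_mem (leftCover_mono F)
    (exists_finset_mem_leftCover hF) (A ∪ F * A)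
  obtain ⟨K, hKT, hK⟩ := exists_finset_forall_mem (rightCover_mono T F)
    (exists_finset_mem_rightCover hF) (G * F)
  have hBT : ((G ∪ K : Finset S) : Set S) ⊆ T := by simp [hGT, hKT]
  have hS : ∀ s, s ∈ leftCover (closure (G : Set S)) F := fun s =>
    closure_subset_leftCover (fun a ha => hG a (Finset.mem_union_left _ ha))
      (fun h hh a ha => hG _ (Finset.mem_union_right _ (Finset.mul_mem_mul hh ha)))
      (hA ▸ Subsemigroup.mem_top s)
  have hR := leftCover_subset_rightCover (U := closure ((G ∪ K : Finset S) : Set S)) (T := T)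
    (fun g hg => subset_closure (Finset.mem_union_left K hg)) (fun g hg c hc =>
      rightCover_mono T F (closure_mono (by simp)) (hK _ (Finset.mul_mem_mul hg hc)))
  exact ⟨G ∪ K, hBT, le_antisymm (closure_le.mpr hBT)
    fun t ht => mem_of_mem_rightCover hFT (hR (hS t)) ht⟩

theorem closure_union_eq_top {T : Subsemigroup S} {B F : Finset S}
    (hF : ∀ s ∉ T, ∃ c ∈ F, HrelT T s c) (hB : closure (B : Set S) = T) :
    closure ((B : Set S) ∪ F) = ⊤ := by
  refine (Subsemigroup.eq_top_iff' _).mpr fun s => ?_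
  have hTU : T ≤ closure ((B : Set S) ∪ F) := hB ▸ closure_mono Set.subset_union_left
  by_cases hs : s ∈ T
  · exact hTU hs
  obtain ⟨c, hc, hsc⟩ := hF s hs
  exact rset_subset (subset_closure (Set.mem_union_right _ hc))
    (rset_mono hTU c (rrelT_iff.mp hsc.1).1)

section SchutzenbergerGroup

variable {T : Subsemigroup S} {H : Set S} {a x y z : S} {θ : WithOne S}

theorem IsHClassIn.mem_iff (hH : IsHClassIn T H) (hx : x ∈ H) : y ∈ H ↔ HrelT T x y := by
  obtain ⟨a, rfl⟩ := hH
  exact ⟨fun hy => HrelT.trans (HrelT.symm hx) hy, fun hy => HrelT.trans hx hy⟩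

theorem IsHClassIn.nonempty (hH : IsHClassIn T H) : H.Nonempty := by
  obtain ⟨a, rfl⟩ := hH
  exact ⟨a, HrelT.refl T a⟩

theorem coe_mul_mem_of_coe_mul_mem (hH : IsHClassIn T H) (hx : x ∈ H) (hθ : θ ∈ T1 T)
    (hxθ : (x : WithOne S) * θ ∈ (↑) '' H) (hy : y ∈ H) : (y : WithOne S) * θ ∈ (↑) '' H := by
  obtain ⟨x', hx', e⟩ := hxθ
  have hxx' := (hH.mem_iff hx).mp hx'
  have hxy := (hH.mem_iff hx).mp hy
  obtain ⟨y', e', hR, hL⟩ := exists_rrelT_lrelT_of_coe_mul hθ hxy.2.symm e hxx'.1.symm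
  exact ⟨y', (hH.mem_iff hx).mpr ⟨hxy.1.trans hR.symm, hxx'.2.trans hL.symm⟩, e'⟩

theorem mem_stabSet_of_coe_mul_mem (hH : IsHClassIn T H) (hx : x ∈ H) (hθ : θ ∈ T1 T)
    (hxθ : (x : WithOne S) * θ ∈ (↑) '' H) : θ ∈ stabSet T H := by
  refine ⟨hθ, Set.Subset.antisymm ?_ ?_⟩
  · rintro _ ⟨y, hy, rfl⟩
    exact coe_mul_mem_of_coe_mul_mem hH hx hθ hxθ hy
  · rintro _ ⟨y, hy, rfl⟩
    obtain ⟨x', hx', e⟩ := hxθ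
    obtain ⟨σ, hσ, hσe⟩ := mem_rset_iff_coe.mp (rrelT_iff.mp ((hH.mem_iff hx).mp hx').1).1
    -- `σ` undoes `θ` on `H`, so `y = (y σ) θ` with `y σ ∈ H`.
    obtain ⟨y', hy', e'⟩ := coe_mul_mem_of_coe_mul_mem hH hx' hσ ⟨x, hx, hσe⟩ hy
    refine ⟨y', hy', ?_⟩
    rw [e', mul_assoc, coe_mul_eq_self_of_mem_lset (lrelT_iff.mp ((hH.mem_iff hx').mp hy).2).2]
    rw [← mul_assoc, ← hσe, e]

variable {ι κ : S → WithOne S}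

theorem exists_mem_closure_coe_mul_eq (hH : IsHClassIn T H)
    (hκ : ∀ z, RrelT T z a → κ z ∈ T1 T ∧ (z : WithOne S) * κ z ∈ (↑) '' H)
    (hι : ∀ z, RrelT T z a → ι z ∈ T1 T ∧ (z : WithOne S) * κ z * ι z = z)
    {B : Set S} (hBT : B ⊆ T) {X : Set (WithOne S)}
    (hX : ∀ z b, RrelT T z a → RrelT T (z * b) a → b ∈ B →
      ι z * b * κ (z * b) ∈ stabSet T H → ι z * b * κ (z * b) ∈ X)
    {τ : S} (hτ : τ ∈ closure B) (hz : RrelT T z a) (hzτ : RrelT T (z * τ) a) :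
    ∃ w ∈ closure X, (z : WithOne S) * κ z * w = ↑(z * τ) * κ (z * τ) := by
  induction hτ using Subsemigroup.closure_induction generalizing z with
  | mem b hb =>
    obtain ⟨-, x, hx, hxe⟩ := hκ z hz
    have key : (z : WithOne S) * κ z * (ι z * b * κ (z * b)) = ↑(z * b) * κ (z * b) := by
      simp only [← mul_assoc]
      rw [(hι z hz).2, WithOne.coe_mul]
    have hθ : ι z * b * κ (z * b) ∈ T1 T :=
      mul_mem_T1 (mul_mem_T1 (hι z hz).1 (coe_mem_T1 (hBT hb))) (hκ _ hzτ).1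
    refine ⟨_, subset_closure (hX z b hz hzτ hb ?_), key⟩
    exact mem_stabSet_of_coe_mul_mem hH hx hθ (by rw [hxe, key]; exact (hκ _ hzτ).2)
  | mul s t hs ht ihs iht =>
    have hzs : RrelT T (z * s) a := (rrelT_mul_of_rrelT_mul_mul (closure_le.mpr hBT hs)
      (closure_le.mpr hBT ht) (hzτ.trans hz.symm)).trans hz
    obtain ⟨w₁, hw₁, e₁⟩ := ihs hz hzs
    obtain ⟨w₂, hw₂, e₂⟩ := iht hzs (by rwa [mul_assoc])
    exact ⟨w₁ * w₂, mul_mem hw₁ hw₂, by rw [← mul_assoc, e₁, e₂, mul_assoc]⟩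

end SchutzenbergerGroup

section Transversal

variable {T : Subsemigroup S} {H : Set S} {a : S} {F : Finset S}

theorem exists_hrelT_rep (hF : ∀ s ∉ T, ∃ c ∈ F, HrelT T s c) (hH : IsHClassIn T H)
    (ha : a ∈ H) : ∃ r : S → S, (∀ z ∉ T, r z ∈ insert a (F : Set S) ∧ HrelT T z (r z)) ∧
      ∀ z ∈ H, r z = a := by
  have : ∀ z, ∃ c ∈ insert a (F : Set S), (z ∉ T → HrelT T z c) ∧ (z ∈ H → c = a) := by
    intro z
    by_cases hzH : z ∈ H
    · exact ⟨a, Set.mem_insert a _, fun _ => ((hH.mem_iff ha).mp hzH).symm,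
        fun _ => rfl⟩
    by_cases hzT : z ∈ T
    · exact ⟨a, Set.mem_insert a _, fun h => absurd hzT h, fun h => absurd h hzH⟩
    obtain ⟨c, hc, hzc⟩ := hF z hzT
    exact ⟨c, Set.mem_insert_of_mem a hc, fun _ => hzc, fun h => absurd h hzH⟩
  choose r hrF hr using this
  exact ⟨r, fun z hz => ⟨hrF z, (hr z).1 hz⟩, fun z hz => (hr z).2 hz⟩

theorem exists_connectors (T : Subsemigroup S) (a : S) : ∃ θ θ' : S → WithOne S, ∀ c, RrelT T c a →
    θ c ∈ T1 T ∧ θ' c ∈ T1 T ∧ (a : WithOne S) * θ c = c ∧ (c : WithOne S) * θ' c = a := by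
  have : ∀ c, ∃ θ θ' : WithOne S, RrelT T c a →
      θ ∈ T1 T ∧ θ' ∈ T1 T ∧ (a : WithOne S) * θ = c ∧ (c : WithOne S) * θ' = a := by
    intro c
    by_cases hc : RrelT T c a
    · obtain ⟨θ', hθ', e'⟩ := mem_rset_iff_coe.mp (rrelT_iff.mp hc).2
      obtain ⟨θ, hθ, e⟩ := mem_rset_iff_coe.mp (rrelT_iff.mp hc).1
      exact ⟨θ, θ', fun _ => ⟨hθ, hθ', e.symm, e'.symm⟩⟩
    · exact ⟨1, 1, fun h => absurd h hc⟩
  choose θ θ' h using this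
  exact ⟨θ, θ', h⟩

theorem exists_transversal (hF : ∀ s ∉ T, ∃ c ∈ F, HrelT T s c) (hH : IsHClassIn T H)
    (ha : a ∈ H) (hHT : ∀ x ∈ H, x ∉ T) :
    ∃ (ι κ : S → WithOne S) (I K : Finset (WithOne S)),
      (∀ z, RrelT T z a → ι z ∈ I ∧ κ z ∈ K) ∧
      (∀ z, RrelT T z a → κ z ∈ T1 T ∧ (z : WithOne S) * κ z ∈ (↑) '' H) ∧
      (∀ z, RrelT T z a → ι z ∈ T1 T ∧ (z : WithOne S) * κ z * ι z = z) ∧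
      ∀ z ∈ H, (z : WithOne S) * κ z = z := by
  classical
  obtain ⟨r, hr, hrH⟩ := exists_hrelT_rep hF hH ha
  obtain ⟨θ, θ', hθ⟩ := exists_connectors T a
  have hzT : ∀ z, RrelT T z a → z ∉ T := fun z hz hzT => hHT a ha (hz.mem_iff.mp hzT)
  have hrR : ∀ z, RrelT T z a → RrelT T (r z) a := fun z hz =>
    (((hr z (hzT z hz)).2).1).symm.trans hz
  refine ⟨fun z => θ (r z), fun z => θ' (r z), (insert a F).image θ, (insert a F).image θ',
    fun z hz => ?_, fun z hz => ?_, fun z hz => ?_, fun z hz => ?_⟩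
  · have hrz : r z ∈ insert a F := by simpa using (hr z (hzT z hz)).1
    exact ⟨Finset.mem_image_of_mem θ hrz, Finset.mem_image_of_mem θ' hrz⟩
  · obtain ⟨-, hθ', -, e'⟩ := hθ _ (hrR z hz)
    have hzr := (hr z (hzT z hz)).2
    obtain ⟨y, e, hyz, hya⟩ := exists_rrelT_lrelT_of_coe_mul hθ' hzr.2 e'.symm
      (hrR z hz).symm
    exact ⟨hθ', y, (hH.mem_iff ha).mpr ⟨hz.symm.trans hyz.symm, hya.symm⟩, e⟩
  · obtain ⟨hθr, -, e, e'⟩ := hθ _ (hrR z hz)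
    refine ⟨hθr, ?_⟩
    rw [mul_assoc, coe_mul_eq_self_of_mem_lset (lrelT_iff.mp (hr z (hzT z hz)).2.2).1]
    rw [← mul_assoc, e', e]
  · obtain ⟨-, -, -, e'⟩ := hθ a (HrelT.refl T a).1
    dsimp only
    rw [hrH z hz]
    exact coe_mul_eq_self_of_mem_lset (lrelT_iff.mp ((hH.mem_iff ha).mp hz).2).2 e'

end Transversal

theorem exists_finset_stabSet_generators {T : Subsemigroup S} {H : Set S} {B : Finset S}
    (hGI : FiniteGreenIndex T) (hH : IsHClassIn T H) (hHT : ∀ x ∈ H, x ∉ T)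
    (hB : closure (B : Set S) = T) :
    ∃ X : Finset (WithOne S), (X : Set (WithOne S)) ⊆ stabSet T H ∧
      ∀ t ∈ stabSet T H, ∃ w ∈ closure (X : Set (WithOne S)),
        ∀ g ∈ H, (g : WithOne S) * t = g * w := by
  classical
  obtain ⟨F, -, hF⟩ := hGI
  obtain ⟨a, ha⟩ := hH.nonempty
  obtain ⟨ι, κ, I, K, hIK, hκ, hι, hκH⟩ := exists_transversal hF hH ha hHT
  let X : Finset (WithOne S) :=
    insert 1 (((I ×ˢ B ×ˢ K).image fun p => p.1 * (p.2.1 : WithOne S) * p.2.2).filter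
      (· ∈ stabSet T H))
  have hX : ∀ z b, RrelT T z a → RrelT T (z * b) a → b ∈ (B : Set S) →
      ι z * b * κ (z * b) ∈ stabSet T H → ι z * b * κ (z * b) ∈ (X : Set (WithOne S)) :=
    fun z b hz hzb hb hstab => Finset.mem_insert_of_mem <| Finset.mem_filter.mpr
      ⟨Finset.mem_image.mpr ⟨(ι z, b, κ (z * b)), Finset.mem_product.mpr ⟨(hIK z hz).1,
        Finset.mem_product.mpr ⟨hb, (hIK _ hzb).2⟩⟩, rfl⟩, hstab⟩
  refine ⟨X, fun w hw => ?_, fun t ⟨ht, htH⟩ => ?_⟩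
  · rcases Finset.mem_insert.mp hw with rfl | hw
    exacts [one_mem_stabSet T H, (Finset.mem_filter.mp hw).2]
  rcases ht with rfl | ⟨τ, hτ, rfl⟩
  · exact ⟨1, subset_closure (Finset.mem_insert_self 1 _), fun g _ => rfl⟩
  obtain ⟨y, hy, e⟩ : (a : WithOne S) * τ ∈ (↑) '' H := htH ▸ ⟨a, ha, rfl⟩
  have haτ : a * τ ∈ H := by
    rw [← WithOne.coe_mul, WithOne.coe_inj] at e
    exact e ▸ hy
  obtain ⟨w, hw, hwe⟩ := exists_mem_closure_coe_mul_eq hH hκ hι (hB ▸ subset_closure) hX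
    (hB.symm ▸ hτ : τ ∈ closure (B : Set S)) (HrelT.refl T a).1
    ((hH.mem_iff ha).mp haτ).1.symm
  rw [hκH a ha, hκH _ haτ, WithOne.coe_mul] at hwe
  exact ⟨w, hw, fun g hg => coe_mul_eq_of_mem_lset (lrelT_iff.mp ((hH.mem_iff ha).mp hg).2).2
    hwe.symm⟩

end GreenIndexPaper

open GreenIndexPaper

/-- for `T` of finite Green index in `S`, `S` is finitely generated iff `T`
is, in which case all relative Schützenberger groups are finitely generated. -/
theorem fg_iff_fg_of_finiteGreenIndex
    {S : Type*} [Semigroup S] (T : Subsemigroup S) (hGI : FiniteGreenIndex T) :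
    ((∃ A : Finset S, Subsemigroup.closure (↑A : Set S) = ⊤) ↔
      (∃ B : Finset S, (↑B : Set S) ⊆ (T : Set S) ∧
        Subsemigroup.closure (↑B : Set S) = T)) ∧
    ((∃ A : Finset S, Subsemigroup.closure (↑A : Set S) = ⊤) →
      ∀ H : Set S, IsHClassIn T H → (∀ x ∈ H, x ∉ T) →
        ∃ X : Finset (WithOne S), (↑X : Set (WithOne S)) ⊆ stabSet T H ∧
          ∀ t ∈ stabSet T H, ∃ l : List (WithOne S), l ≠ [] ∧ (∀ x ∈ l, x ∈ X) ∧
            ∀ g ∈ H, (g : WithOne S) * t = (g : WithOne S) * l.prod) := by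
  have hT : (∃ A : Finset S, Subsemigroup.closure (A : Set S) = ⊤) →
      ∃ B : Finset S, (B : Set S) ⊆ T ∧ Subsemigroup.closure (B : Set S) = T :=
    fun ⟨A, hA⟩ => exists_finset_closure_eq_of_closure_eq_top hGI hA
  refine ⟨⟨hT, fun ⟨B, _, hB⟩ => ?_⟩, fun hS H hH hHT => ?_⟩
  · classical
    obtain ⟨F, -, hF⟩ := hGI
    exact ⟨B ∪ F, by rw [Finset.coe_union]; exact closure_union_eq_top hF hB⟩
  obtain ⟨B, -, hB⟩ := hT hS
  obtain ⟨X, hXstab, hX⟩ := exists_finset_stabSet_generators hGI hH hHT hB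
  refine ⟨X, hXstab, fun t ht => ?_⟩
  obtain ⟨w, hw, hgw⟩ := hX t ht
  obtain ⟨l, hl, hlX, rfl⟩ := exists_list_of_mem_closure hw
  exact ⟨l, hl, hlX, hgw⟩
end

section
/- Let S be a semigroup and let T be a subsemigroup of S such that the complement S \ T is finite (i.e. T has finite Rees index in S). If T is finitely presented, then S is finitely presented. -/
open GreenIndexPaper

/-!
Take generators `A` of `T` together with the finitely many elements of `S \ T` as generators
of `S`. Every element `s` has a normal form: `s` itself as a letter if `s ∉ T`, and a fixed
`A`-word representing `s` if `s ∈ T`. Besides the relations of `T`, impose one relation for each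
of the finitely many pairs of letters `x y`, rewriting `x y` to the normal form of its value.
Multiplying a normal form on the left by a letter can then be brought back to normal form
using these relations (pushing a letter outside `T` through an `A`-word letter by letter), so
every word is congruent to the normal form of its value and the relations present `S`.
-/

def FreeSemigroup.congr {α β : Type*} (e : α ≃ β) : FreeSemigroup α ≃* FreeSemigroup β where
  toFun := FreeSemigroup.map e
  invFun := FreeSemigroup.map e.symm
  left_inv w := by induction w using FreeSemigroup.recOnMul <;> simp_all
  right_inv w := by induction w using FreeSemigroup.recOnMul <;> simp_all
  map_mul' := map_mul _

theorem semigroupFP_of_presentation {S Γ : Type*} [Semigroup S] [Finite Γ]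
    {σ : FreeSemigroup Γ →ₙ* S} (hσ : Function.Surjective σ)
    {r : Set (FreeSemigroup Γ × FreeSemigroup Γ)} (hr : r.Finite)
    (hker : conGen (fun x y => (x, y) ∈ r) = Con.ker σ) : SemigroupFP S := by
  obtain ⟨n, e⟩ := Finite.exists_equiv_fin Γ
  set E := FreeSemigroup.congr e.some.symm
  have hr' : (Prod.map E E ⁻¹' r).Finite :=
    hr.preimage (E.injective.prodMap E.injective).injOn
  refine ⟨n, σ.comp E.toMulHom, hσ.comp E.surjective, hr'.toFinset, fun u v => ?_⟩
  have hcomap := Con.comap_conGen_equiv E fun x y => (x, y) ∈ r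
  rw [hker] at hcomap
  simpa using (Con.ext_iff.1 hcomap u v).symm

namespace Subsemigroup

variable {S A : Type*} [Semigroup S] {T : Subsemigroup S}

section

variable (π : FreeSemigroup A →ₙ* T)

def reesLetterValue : A ⊕ ↥(T : Set S)ᶜ → S :=
  Sum.elim (fun a => π (.of a)) Subtype.val

def reesEval : FreeSemigroup (A ⊕ ↥(T : Set S)ᶜ) →ₙ* S :=
  FreeSemigroup.lift (reesLetterValue π)

@[simp]
theorem reesEval_of (x : A ⊕ ↥(T : Set S)ᶜ) : reesEval π (.of x) = reesLetterValue π x := rfl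

@[simp]
theorem reesEval_map_inl (u : FreeSemigroup A) :
    reesEval π (FreeSemigroup.map Sum.inl u) = π u := by
  induction u using FreeSemigroup.recOnMul <;> simp_all [reesLetterValue]

end

variable {π : FreeSemigroup A →ₙ* T} (hπ : Function.Surjective π)

open Classical in
noncomputable def reesNormalForm (s : S) : FreeSemigroup (A ⊕ ↥(T : Set S)ᶜ) :=
  if h : s ∈ T then FreeSemigroup.map Sum.inl (Function.surjInv hπ ⟨s, h⟩)
  else .of (.inr ⟨s, h⟩)

theorem reesNormalForm_of_mem {s : S} (h : s ∈ T) :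
    reesNormalForm hπ s = FreeSemigroup.map Sum.inl (Function.surjInv hπ ⟨s, h⟩) :=
  dif_pos h

theorem reesNormalForm_of_notMem {s : S} (h : s ∉ T) :
    reesNormalForm hπ s = .of (.inr ⟨s, h⟩) :=
  dif_neg h

@[simp]
theorem reesEval_reesNormalForm (s : S) : reesEval π (reesNormalForm hπ s) = s := by
  by_cases h : s ∈ T
  · simp [reesNormalForm_of_mem hπ h, Function.surjInv_eq hπ]
  · simp [reesNormalForm_of_notMem hπ h, reesLetterValue]

theorem reesEval_surjective (hπ : Function.Surjective π) : Function.Surjective (reesEval π) :=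
  fun s => ⟨reesNormalForm hπ s, reesEval_reesNormalForm hπ s⟩

def reesRelations (R : Set (FreeSemigroup A × FreeSemigroup A)) :
    Set (FreeSemigroup (A ⊕ ↥(T : Set S)ᶜ) × FreeSemigroup (A ⊕ ↥(T : Set S)ᶜ)) :=
  Prod.map (FreeSemigroup.map Sum.inl) (FreeSemigroup.map Sum.inl) '' R ∪
    Set.range fun xy : (A ⊕ ↥(T : Set S)ᶜ) × (A ⊕ ↥(T : Set S)ᶜ) =>
      (.of xy.1 * .of xy.2, reesNormalForm hπ (reesLetterValue π xy.1 * reesLetterValue π xy.2))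

theorem finite_reesRelations [Finite A] [Finite ↥(T : Set S)ᶜ]
    {R : Set (FreeSemigroup A × FreeSemigroup A)} (hR : R.Finite) :
    (reesRelations hπ R).Finite :=
  (hR.image _).union (Set.finite_range _)

variable (R : Set (FreeSemigroup A × FreeSemigroup A))

abbrev reesCon : Con (FreeSemigroup (A ⊕ ↥(T : Set S)ᶜ)) :=
  conGen fun x y => (x, y) ∈ reesRelations hπ R

theorem reesCon_le_ker (hR : conGen (fun u v => (u, v) ∈ R) ≤ Con.ker π) :
    reesCon hπ R ≤ Con.ker (reesEval π) := by
  refine Con.conGen_le.2 ?_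
  rintro _ _ (⟨⟨u, v⟩, huv, ⟨⟩⟩ | ⟨⟨x, y⟩, ⟨⟩⟩)
  · simpa using congrArg Subtype.val (hR (ConGen.Rel.of _ _ huv))
  · simp

theorem reesCon_of_mul_of (x y : A ⊕ ↥(T : Set S)ᶜ) :
    reesCon hπ R (.of x * .of y) (reesNormalForm hπ (reesLetterValue π x * reesLetterValue π y)) :=
  ConGen.Rel.of _ _ (.inr ⟨(x, y), rfl⟩)

variable {R}

theorem reesCon_map_inl (hR : Con.ker π ≤ conGen fun u v => (u, v) ∈ R)
    {u v : FreeSemigroup A} (huv : π u = π v) :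
    reesCon hπ R (FreeSemigroup.map Sum.inl u) (FreeSemigroup.map Sum.inl v) := by
  refine (Con.conGen_le (c := (reesCon hπ R).comap _ (map_mul _))).2 ?_ (hR huv)
  exact fun u v huv => ConGen.Rel.of _ _ (.inl ⟨(u, v), huv, rfl⟩)

theorem reesCon_map_inl_reesNormalForm (hR : Con.ker π ≤ conGen fun u v => (u, v) ∈ R)
    (u : FreeSemigroup A) :
    reesCon hπ R (FreeSemigroup.map Sum.inl u) (reesNormalForm hπ (π u)) := by
  rw [reesNormalForm_of_mem hπ (π u).2]
  exact reesCon_map_inl hπ hR (Function.surjInv_eq hπ _).symm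

theorem reesCon_reesNormalForm_mul_map_inl_of_mem
    (hR : Con.ker π ≤ conGen fun u v => (u, v) ∈ R) {s : S} (hs : s ∈ T) (u : FreeSemigroup A) :
    reesCon hπ R (reesNormalForm hπ s * FreeSemigroup.map Sum.inl u)
      (reesNormalForm hπ (s * π u)) := by
  rw [reesNormalForm_of_mem hπ hs, ← map_mul]
  convert reesCon_map_inl_reesNormalForm hπ hR _ using 2
  simp [Function.surjInv_eq hπ]

theorem reesCon_reesNormalForm_mul_map_inl (hR : Con.ker π ≤ conGen fun u v => (u, v) ∈ R)
    (s : S) (u : FreeSemigroup A) :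
    reesCon hπ R (reesNormalForm hπ s * FreeSemigroup.map Sum.inl u)
      (reesNormalForm hπ (s * π u)) := by
  induction u using FreeSemigroup.recOnMul generalizing s with
  | ih1 a =>
    by_cases hs : s ∈ T
    · exact reesCon_reesNormalForm_mul_map_inl_of_mem hπ hR hs _
    · rw [reesNormalForm_of_notMem hπ hs]
      exact reesCon_of_mul_of hπ R (.inr ⟨s, hs⟩) (.inl a)
  | ih2 a u _ ih =>
    by_cases hs : s ∈ T
    · exact reesCon_reesNormalForm_mul_map_inl_of_mem hπ hR hs _
    · have hsa := (reesCon hπ R).mul (reesCon_of_mul_of hπ R (.inr ⟨s, hs⟩) (.inl a))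
        ((reesCon hπ R).refl (FreeSemigroup.map Sum.inl u))
      rw [← reesNormalForm_of_notMem hπ hs] at hsa
      rw [map_mul (FreeSemigroup.map Sum.inl), FreeSemigroup.map_of, ← mul_assoc]
      refine (reesCon hπ R).trans hsa ?_
      simpa [reesLetterValue, mul_assoc] using ih (s * π (.of a))

theorem reesCon_of_mul_reesNormalForm (hR : Con.ker π ≤ conGen fun u v => (u, v) ∈ R)
    (x : A ⊕ ↥(T : Set S)ᶜ) (s : S) :
    reesCon hπ R (.of x * reesNormalForm hπ s) (reesNormalForm hπ (reesLetterValue π x * s)) := by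
  by_cases hs : s ∈ T
  · obtain ⟨w, rfl⟩ : ∃ w, (π w : S) = s :=
      ⟨_, congrArg Subtype.val (Function.surjInv_eq hπ ⟨s, hs⟩)⟩
    refine (reesCon hπ R).trans ((reesCon hπ R).mul ((reesCon hπ R).refl _)
      (reesCon_map_inl_reesNormalForm hπ hR w).symm) ?_
    rcases x with a | b
    · simpa [reesLetterValue] using reesCon_map_inl_reesNormalForm hπ hR (.of a * w)
    · simpa [reesNormalForm_of_notMem hπ b.2, reesLetterValue] using
        reesCon_reesNormalForm_mul_map_inl hπ hR b w
  · rw [reesNormalForm_of_notMem hπ hs]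
    exact reesCon_of_mul_of hπ R x (.inr ⟨s, hs⟩)

theorem reesCon_reesNormalForm_reesEval (hR : Con.ker π ≤ conGen fun u v => (u, v) ∈ R)
    (w : FreeSemigroup (A ⊕ ↥(T : Set S)ᶜ)) :
    reesCon hπ R w (reesNormalForm hπ (reesEval π w)) := by
  induction w using FreeSemigroup.recOnMul with
  | ih1 x =>
    rcases x with a | b
    · exact reesCon_map_inl_reesNormalForm hπ hR (.of a)
    · rw [reesEval_of, reesLetterValue, Sum.elim_inr, reesNormalForm_of_notMem hπ b.2]
      exact (reesCon hπ R).refl _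
  | ih2 x w _ ih =>
    rw [map_mul (reesEval π), reesEval_of]
    exact (reesCon hπ R).trans ((reesCon hπ R).mul ((reesCon hπ R).refl _) ih)
      (reesCon_of_mul_reesNormalForm hπ hR x _)

theorem ker_le_reesCon (hR : Con.ker π ≤ conGen fun u v => (u, v) ∈ R) :
    Con.ker (reesEval π) ≤ reesCon hπ R := fun u v (huv : reesEval π u = reesEval π v) =>
  (reesCon_reesNormalForm_reesEval hπ hR u).trans <| by
    rw [huv]; exact (reesCon_reesNormalForm_reesEval hπ hR v).symm

theorem reesCon_eq_ker (hR : conGen (fun u v => (u, v) ∈ R) = Con.ker π) :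
    reesCon hπ R = Con.ker (reesEval π) :=
  le_antisymm (reesCon_le_ker hπ R hR.le) (ker_le_reesCon hπ hR.ge)

end Subsemigroup

/-- finite presentability passes from a subsemigroup of finite Rees index to
the whole semigroup. -/
theorem finitely_presented_of_finite_rees_index
    {S : Type*} [Semigroup S] (T : Subsemigroup S) (hRees : ((T : Set S)ᶜ).Finite)
    (hT : SemigroupFP T) : SemigroupFP S := by
  obtain ⟨n, π, hπ, R, hR⟩ := hT
  have := hRees.to_subtype
  exact semigroupFP_of_presentation (Subsemigroup.reesEval_surjective hπ)
    (Subsemigroup.finite_reesRelations hπ R.finite_toSet)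
    (Subsemigroup.reesCon_eq_ker hπ (Con.ext hR))
end

section
/- Let S be a semigroup with finitely many left ideals and finitely many right ideals. Then S is residually finite if and only if every Schützenberger group of S is residually finite. -/
open GreenIndexPaper

/-!
If `S` is residually finite, pick `h ∈ H` with `h σ ≠ h τ` and a finite quotient `φ` of `S`
separating these two elements of `H`; then `Γ(H)` acts on the finite set `φ(H) ⊆ F¹` on the right
and this action already separates `σ` from `τ`.

Conversely, to separate `x ≠ y` let `H` be the `ℋ`-class of `x`, and let `θ` be a finite quotient
of `Γ(H)` separating the coordinates of `x` and `y` in `H`. The profile of `w ∈ S¹`, the map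
sending `p` to `θ` of the coordinate of `w p` (when `w p ∈ H`), satisfies
`profile (w s) = profile w ∘ (s * ·)`, so `S` acts on profiles, and `x`, `y` have different
profiles. By Green's lemma a profile is determined by finitely much data once `S` has finitely
many left and right ideals, so this action is on a finite set.
-/

namespace GreenIndexPaper

section Separation

variable {M : Type*}

def FinitelySeparated [Mul M] (x y : M) : Prop :=
  ∃ (F : Type) (_ : Semigroup F) (_ : Finite F) (φ : M →ₙ* F), φ x ≠ φ y

/-- `Shrink` moves the finite transformation monoid of `Q` down to `Type`. -/
theorem finitelySeparated_of_rightAction {Q : Type*} [Semigroup M] [Finite Q]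
    (act : Q → M → Q) (hact : ∀ q s t, act (act q s) t = act q (s * t)) (q : Q) {x y : M}
    (h : act q x ≠ act q y) : FinitelySeparated x y := by
  let ρ : M →ₙ* (Function.End Q)ᵐᵒᵖ :=
    { toFun := fun s => .op (act · s)
      map_mul' := fun s t => by
        apply MulOpposite.unop_injective
        funext q
        exact (hact q s t).symm }
  have : Finite (Function.End Q)ᵐᵒᵖ := Finite.of_equiv (Q → Q) MulOpposite.opEquiv
  let e : Shrink.{0} (Function.End Q)ᵐᵒᵖ ≃* (Function.End Q)ᵐᵒᵖ := Shrink.mulEquiv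
  refine ⟨Shrink.{0} (Function.End Q)ᵐᵒᵖ, inferInstance, inferInstance,
    e.symm.toMulHom.comp ρ, fun he => h ?_⟩
  exact congrFun (congrArg MulOpposite.unop (e.symm.injective he)) q

theorem ResiduallyFiniteMul.exists_option_map_ne [Mul M] (hM : ResiduallyFiniteMul M)
    {u v : Option M} (huv : u ≠ v) :
    ∃ (F : Type) (_ : Semigroup F) (_ : Finite F) (θ : M →ₙ* F), u.map θ ≠ v.map θ := by
  rcases u with _ | x <;> rcases v with _ | y
  case some.some =>
    obtain ⟨F, _, _, θ, hθ⟩ := hM x y fun h => huv (congrArg some h)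
    exact ⟨F, inferInstance, inferInstance, θ, by simpa using hθ⟩
  all_goals
    refine ⟨Unit, inferInstance, inferInstance, ⟨fun _ => (), fun _ _ => rfl⟩, ?_⟩
    simp_all

end Separation

section Green

variable {M : Type*} [Monoid M]

def principalRightIdeal (w : M) : Set M := Set.range (w * ·)

def principalLeftIdeal (w : M) : Set M := Set.range (· * w)

def hClass (b : M) : Set M :=
  {w | principalRightIdeal w = principalRightIdeal b ∧ principalLeftIdeal w = principalLeftIdeal b}

theorem mem_hClass_self (b : M) : b ∈ hClass b := ⟨rfl, rfl⟩

theorem mem_principalRightIdeal_self (w : M) : w ∈ principalRightIdeal w := ⟨1, mul_one w⟩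

theorem mem_principalLeftIdeal_self (w : M) : w ∈ principalLeftIdeal w := ⟨1, one_mul w⟩

theorem principalRightIdeal_eq_iff {u v : M} :
    principalRightIdeal u = principalRightIdeal v ↔ (∃ p, v * p = u) ∧ ∃ p, u * p = v := by
  refine ⟨fun h => ⟨(h ▸ mem_principalRightIdeal_self u : u ∈ principalRightIdeal v),
    (h ▸ mem_principalRightIdeal_self v : v ∈ principalRightIdeal u)⟩, ?_⟩
  rintro ⟨⟨p, rfl⟩, ⟨q, hq⟩⟩
  refine subset_antisymm ?_ ?_ <;> rintro _ ⟨r, rfl⟩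
  · exact ⟨p * r, (mul_assoc v p r).symm⟩
  · exact ⟨q * r, by simp only [← mul_assoc, hq]⟩

theorem principalLeftIdeal_eq_iff {u v : M} :
    principalLeftIdeal u = principalLeftIdeal v ↔ (∃ p, p * v = u) ∧ ∃ p, p * u = v := by
  refine ⟨fun h => ⟨(h ▸ mem_principalLeftIdeal_self u : u ∈ principalLeftIdeal v),
    (h ▸ mem_principalLeftIdeal_self v : v ∈ principalLeftIdeal u)⟩, ?_⟩
  rintro ⟨⟨p, rfl⟩, ⟨q, hq⟩⟩
  refine subset_antisymm ?_ ?_ <;> rintro _ ⟨r, rfl⟩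
  · exact ⟨r * p, mul_assoc r p v⟩
  · exact ⟨r * q, by simp only [mul_assoc, hq]⟩

theorem principalRightIdeal_mul (u p : M) :
    principalRightIdeal (u * p) = (u * ·) '' principalRightIdeal p := by
  simp only [principalRightIdeal, ← Set.range_comp, Function.comp_def, mul_assoc]

theorem principalLeftIdeal_mul (u p : M) :
    principalLeftIdeal (u * p) = (· * p) '' principalLeftIdeal u := by
  simp only [principalLeftIdeal, ← Set.range_comp, Function.comp_def, mul_assoc]

theorem exists_mul_eq_of_mem_hClass {b v w : M} (hv : v ∈ hClass b) (hw : w ∈ hClass b) :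
    ∃ q, v * q = w :=
  (principalRightIdeal_eq_iff.1 (hv.1.trans hw.1.symm)).2

theorem exists_mul_eq_of_mem_hClass' {b v w : M} (hv : v ∈ hClass b) (hw : w ∈ hClass b) :
    ∃ u, u * v = w :=
  (principalLeftIdeal_eq_iff.1 (hv.2.trans hw.2.symm)).2

theorem mul_mem_hClass_of_mul_mem {b h q q' g : M} (hh : h ∈ hClass b) (hq : h * q ∈ hClass b)
    (hq' : h * q * q' = h) (hg : g ∈ hClass b) : g * q ∈ hClass b ∧ g * q * q' = g := by
  obtain ⟨v, rfl⟩ := exists_mul_eq_of_mem_hClass' hh hg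
  obtain ⟨v', hv'⟩ := exists_mul_eq_of_mem_hClass' hg hh
  have hret : v * h * q * q' = v * h := by simp only [mul_assoc] at hq' ⊢; rw [hq']
  refine ⟨⟨?_, ?_⟩, hret⟩
  · exact (principalRightIdeal_eq_iff.2 ⟨⟨q', hret⟩, ⟨q, rfl⟩⟩).symm.trans hg.1
  · refine (principalLeftIdeal_eq_iff.2 ⟨⟨v, ?_⟩, ⟨v', ?_⟩⟩).trans hq.2
    · exact (mul_assoc v h q).symm
    · rw [← mul_assoc, hv']

/-- Green's lemma. -/
theorem image_mul_right_hClass {b h q : M} (hh : h ∈ hClass b) (hq : h * q ∈ hClass b) :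
    (· * q) '' hClass b = hClass b := by
  obtain ⟨q', hq'⟩ := exists_mul_eq_of_mem_hClass hq hh
  refine subset_antisymm ?_ fun g hg => ?_
  · rintro _ ⟨g, hg, rfl⟩
    exact (mul_mem_hClass_of_mul_mem hh hq hq' hg).1
  · obtain ⟨hmem, heq⟩ :=
      mul_mem_hClass_of_mul_mem hq (hq'.symm ▸ hh) (by rw [hq']) hg
    exact ⟨g * q', hmem, heq⟩

theorem mul_mem_hClass_iff {b u p : M} :
    u * p ∈ hClass b ↔ (u * ·) '' principalRightIdeal p = principalRightIdeal b ∧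
      (· * p) '' principalLeftIdeal u = principalLeftIdeal b := by
  rw [← principalRightIdeal_mul, ← principalLeftIdeal_mul]
  rfl

/-- Whether `w p ∈ H_b` depends on `w` only through `M w` and the set of principal right
ideals `R` with `w R = b M`. -/
theorem finite_range_setOf_mul_mem_hClass (b : M)
    (hR : (Set.range (principalRightIdeal (M := M))).Finite)
    (hL : (Set.range (principalLeftIdeal (M := M))).Finite) :
    (Set.range fun w : M => {p | w * p ∈ hClass b}).Finite := by
  let A : M → Set (Set M) := fun w =>
    {R ∈ Set.range principalRightIdeal | (w * ·) '' R = principalRightIdeal b}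
  let Φ : Set (Set M) → Set M → Set M := fun 𝒜 L =>
    {p | principalRightIdeal p ∈ 𝒜 ∧ (· * p) '' L = principalLeftIdeal b}
  have hA : (Set.range A).Finite :=
    hR.finite_subsets.subset (Set.range_subset_iff.2 fun w _ hR => hR.1)
  refine ((hA.image2 Φ hL).subset ?_)
  rintro _ ⟨w, rfl⟩
  refine ⟨A w, ⟨w, rfl⟩, principalLeftIdeal w, ⟨w, rfl⟩, ?_⟩
  ext p
  simp only [Φ, A, Set.mem_ofPred_eq, Set.mem_range_self, true_and, mul_mem_hClass_iff]

end Green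

section Adjoin

variable {S : Type*} [Semigroup S]

theorem principalRightIdeal_coe (s : S) :
    principalRightIdeal (s : WithOne S) = (↑) '' rset ⊤ s := by
  ext w
  constructor
  · rintro ⟨p, rfl⟩
    induction p using WithOne.recOneCoe with
    | one => exact ⟨s, Set.mem_insert _ _, (mul_one _).symm⟩
    | coe t => exact ⟨s * t, Or.inr ⟨t, trivial, rfl⟩, WithOne.coe_mul s t⟩
  · rintro ⟨_, rfl | ⟨t, -, rfl⟩, rfl⟩
    · exact ⟨1, mul_one _⟩
    · exact ⟨t, (WithOne.coe_mul s t).symm⟩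

theorem principalLeftIdeal_coe (s : S) :
    principalLeftIdeal (s : WithOne S) = (↑) '' lset ⊤ s := by
  ext w
  constructor
  · rintro ⟨p, rfl⟩
    induction p using WithOne.recOneCoe with
    | one => exact ⟨s, Set.mem_insert _ _, (one_mul _).symm⟩
    | coe t => exact ⟨t * s, Or.inr ⟨t, trivial, rfl⟩, WithOne.coe_mul t s⟩
  · rintro ⟨_, rfl | ⟨t, -, rfl⟩, rfl⟩
    · exact ⟨1, one_mul _⟩
    · exact ⟨t, (WithOne.coe_mul t s).symm⟩

theorem isRightIdeal_rset (s : S) : IsRightIdeal (rset ⊤ s) := by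
  refine ⟨⟨s, Set.mem_insert _ _⟩, ?_⟩
  rintro t _ (rfl | ⟨r, -, rfl⟩)
  · exact Or.inr ⟨t, trivial, rfl⟩
  · exact Or.inr ⟨r * t, trivial, mul_assoc s r t⟩

theorem isLeftIdeal_lset (s : S) : IsLeftIdeal (lset ⊤ s) := by
  refine ⟨⟨s, Set.mem_insert _ _⟩, ?_⟩
  rintro t _ (rfl | ⟨r, -, rfl⟩)
  · exact Or.inr ⟨t, trivial, rfl⟩
  · exact Or.inr ⟨t * r, trivial, (mul_assoc t r s).symm⟩

theorem finite_range_principalRightIdeal (hR : {R : Set S | IsRightIdeal R}.Finite) :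
    (Set.range (principalRightIdeal (M := WithOne S))).Finite := by
  refine ((hR.image (Set.image (↑))).insert Set.univ).subset ?_
  rintro _ ⟨w, rfl⟩
  induction w using WithOne.recOneCoe with
  | one => exact Or.inl (Set.range_eq_univ.2 fun w => ⟨w, one_mul w⟩)
  | coe s => exact Or.inr ⟨rset ⊤ s, isRightIdeal_rset s, (principalRightIdeal_coe s).symm⟩

theorem finite_range_principalLeftIdeal (hL : {L : Set S | IsLeftIdeal L}.Finite) :
    (Set.range (principalLeftIdeal (M := WithOne S))).Finite := by
  refine ((hL.image (Set.image (↑))).insert Set.univ).subset ?_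
  rintro _ ⟨w, rfl⟩
  induction w using WithOne.recOneCoe with
  | one => exact Or.inl (Set.range_eq_univ.2 fun w => ⟨w, mul_one w⟩)
  | coe s => exact Or.inr ⟨lset ⊤ s, isLeftIdeal_lset s, (principalLeftIdeal_coe s).symm⟩

theorem image_coe_setOf_hrelT (a : S) :
    (↑) '' {x | HrelT ⊤ a x} = hClass (a : WithOne S) := by
  have hinj : Function.Injective (Set.image ((↑) : S → WithOne S)) :=
    Set.image_injective.2 WithOne.coe_injective
  ext w
  induction w using WithOne.recOneCoe with
  | one =>
    refine iff_of_false (fun ⟨x, _, hx⟩ => WithOne.coe_ne_one hx) fun ⟨h, _⟩ => ?_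
    have h1 : (1 : WithOne S) ∈ principalRightIdeal (a : WithOne S) :=
      h ▸ mem_principalRightIdeal_self 1
    rw [principalRightIdeal_coe] at h1
    obtain ⟨x, -, hx⟩ := h1
    exact WithOne.coe_ne_one hx
  | coe x =>
    simp only [WithOne.coe_injective.mem_set_image, Set.mem_ofPred_eq, hClass,
      principalRightIdeal_coe, principalLeftIdeal_coe, hinj.eq_iff, HrelT, RrelT, LrelT, eq_comm]

theorem mem_stabSet_top_iff {a : S} {t : WithOne S} :
    t ∈ stabSet ⊤ {x | HrelT ⊤ a x} ↔ (· * t) '' hClass (a : WithOne S) = hClass ↑a := by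
  have hT : t ∈ T1 (⊤ : Subsemigroup S) := by
    induction t using WithOne.recOneCoe with
    | one => exact Set.mem_insert _ _
    | coe s => exact Or.inr ⟨s, trivial, rfl⟩
  have hset : setMulR {x | HrelT ⊤ a x} t = (· * t) '' ((↑) '' {x | HrelT ⊤ a x}) := by
    ext; simp [setMulR, eq_comm]
  simp only [stabSet, Set.mem_ofPred_eq, hT, true_and, hset, image_coe_setOf_hrelT]

theorem exists_mul_eq_of_mem_stabSet {T : Subsemigroup S} {H : Set S} {t : WithOne S}
    (ht : t ∈ stabSet T H) {h : S} (hh : h ∈ H) : ∃ h' ∈ H, (h : WithOne S) * t = h' := by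
  have hmem : (h : WithOne S) * t ∈ setMulR H t := ⟨h, hh, rfl⟩
  rw [ht.2] at hmem
  obtain ⟨h', hh', e⟩ := hmem
  exact ⟨h', hh', e.symm⟩

end Adjoin

section Forward

variable {S : Type*} [Semigroup S] {F : Type*} [Semigroup F] {T : Subsemigroup S} {H : Set S}

theorem mapMulHom_mul_mem_image (φ : S →ₙ* F) {t : WithOne S} (ht : t ∈ stabSet T H)
    {z : WithOne F} (hz : z ∈ (fun h : S => WithOne.mapMulHom φ h) '' H) :
    z * WithOne.mapMulHom φ t ∈ (fun h : S => WithOne.mapMulHom φ h) '' H := by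
  obtain ⟨h, hh, rfl⟩ := hz
  obtain ⟨h', hh', e⟩ := exists_mul_eq_of_mem_stabSet ht hh
  exact ⟨h', hh', by dsimp only; rw [← map_mul, e]⟩

def stabImageAct (φ : S →ₙ* F) (z : (fun h : S => WithOne.mapMulHom φ h) '' H)
    (X : SchGroup T H) : (fun h : S => WithOne.mapMulHom φ h) '' H :=
  Con.liftOn X (fun σ => ⟨z * WithOne.mapMulHom φ σ, mapMulHom_mul_mem_image φ σ.2 z.2⟩)
    fun σ τ hστ => by
      obtain ⟨h, hh, hz⟩ := z.2
      refine Subtype.ext ?_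
      change (z : WithOne F) * WithOne.mapMulHom φ σ = z * WithOne.mapMulHom φ τ
      rw [← hz, ← map_mul, ← map_mul, hστ h hh]

theorem stabImageAct_coe (φ : S →ₙ* F) (z : (fun h : S => WithOne.mapMulHom φ h) '' H)
    (σ : stabSubmonoid T H) :
    (stabImageAct φ z (σ : SchGroup T H) : WithOne F) = z * WithOne.mapMulHom φ σ :=
  rfl

theorem stabImageAct_mul (φ : S →ₙ* F) (z : (fun h : S => WithOne.mapMulHom φ h) '' H)
    (X Y : SchGroup T H) : stabImageAct φ (stabImageAct φ z X) Y = stabImageAct φ z (X * Y) := by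
  induction X, Y using Con.induction_on₂ with
  | _ σ τ =>
    rw [← Con.coe_mul]
    refine Subtype.ext ?_
    simp only [stabImageAct_coe, Submonoid.coe_mul, map_mul, mul_assoc]

theorem ResiduallyFiniteMul.schGroup (hS : ResiduallyFiniteMul S) (T : Subsemigroup S)
    (H : Set S) : ResiduallyFiniteMul (SchGroup T H) := by
  intro X Y hXY
  induction X, Y using Con.induction_on₂ with | _ σ τ => ?_
  obtain ⟨h, hh, hne⟩ : ∃ h ∈ H, (h : WithOne S) * σ ≠ h * τ := by
    by_contra! hall
    exact hXY ((Con.eq _).2 hall)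
  obtain ⟨h₁, -, e₁⟩ := exists_mul_eq_of_mem_stabSet σ.2 hh
  obtain ⟨h₂, -, e₂⟩ := exists_mul_eq_of_mem_stabSet τ.2 hh
  obtain ⟨F, _, _, φ, hφ⟩ := hS h₁ h₂ fun e => hne (by rw [e₁, e₂, e])
  have : Finite (WithOne F) := inferInstanceAs (Finite (Option F))
  refine finitelySeparated_of_rightAction (stabImageAct φ) (stabImageAct_mul φ) ⟨_, h, hh, rfl⟩
    fun e => hφ ?_
  have := congrArg Subtype.val e
  rw [stabImageAct_coe, stabImageAct_coe, ← map_mul, ← map_mul, e₁, e₂,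
    WithOne.mapMulHom_coe, WithOne.mapMulHom_coe] at this
  exact WithOne.coe_injective this

end Forward

section Coordinates

variable {S : Type*} [Semigroup S] {a : S}

abbrev StabOf (a : S) := stabSubmonoid (⊤ : Subsemigroup S) {x | HrelT ⊤ a x}

abbrev SchGroupOf (a : S) := SchGroup (⊤ : Subsemigroup S) {x | HrelT ⊤ a x}

theorem mul_mem_hClass_of_stab (σ : StabOf a) {w : WithOne S} (hw : w ∈ hClass (a : WithOne S)) :
    w * σ ∈ hClass (a : WithOne S) :=
  mem_stabSet_top_iff.1 σ.2 ▸ ⟨w, hw, rfl⟩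

theorem gammaCon_of_mul_eq {σ τ : StabOf a} (h : (a : WithOne S) * σ = a * τ) :
    gammaCon ⊤ {x | HrelT ⊤ a x} σ τ := by
  intro g hg
  have hg' : (g : WithOne S) ∈ hClass (a : WithOne S) := image_coe_setOf_hrelT a ▸ ⟨g, hg, rfl⟩
  obtain ⟨v, hv⟩ := exists_mul_eq_of_mem_hClass' (mem_hClass_self _) hg'
  rw [← hv, mul_assoc, mul_assoc, h]

theorem exists_stab_mul_eq {w : WithOne S} (hw : w ∈ hClass (a : WithOne S)) :
    ∃ σ : StabOf a, (a : WithOne S) * σ = w := by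
  obtain ⟨p, hp⟩ := exists_mul_eq_of_mem_hClass (mem_hClass_self _) hw
  exact ⟨⟨p, mem_stabSet_top_iff.2 (image_mul_right_hClass (mem_hClass_self _) (hp ▸ hw))⟩, hp⟩

/-- The coordinate of `w ∈ H_a` in `Γ(H_a)`: the class of any `σ ∈ Stab(H_a)` with `a σ = w`
(see `coord_eq_some`); `none` off `H_a`. -/
noncomputable def coord (a : S) (w : WithOne S) : Option (SchGroupOf a) :=
  open Classical in
  if h : ∃ σ : StabOf a, (a : WithOne S) * σ = w then some h.choose else none

theorem coord_eq_some {σ : StabOf a} {w : WithOne S} (h : (a : WithOne S) * σ = w) :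
    coord a w = some (σ : SchGroupOf a) := by
  have hex : ∃ σ : StabOf a, (a : WithOne S) * σ = w := ⟨σ, h⟩
  rw [coord, dif_pos hex]
  exact congrArg some ((Con.eq _).2 (gammaCon_of_mul_eq (hex.choose_spec.trans h.symm)))

theorem coord_eq_none {w : WithOne S} (hw : w ∉ hClass (a : WithOne S)) : coord a w = none := by
  refine dif_neg fun ⟨σ, hσ⟩ => hw ?_
  exact hσ ▸ mul_mem_hClass_of_stab σ (mem_hClass_self _)

theorem coord_mul {w : WithOne S} (hw : w ∈ hClass (a : WithOne S)) (q : StabOf a) :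
    coord a (w * q) = (coord a w).map (· * (q : SchGroupOf a)) := by
  obtain ⟨σ, rfl⟩ := exists_stab_mul_eq hw
  rw [coord_eq_some rfl, coord_eq_some (σ := σ * q) (mul_assoc _ _ _).symm]
  rfl

theorem eq_of_coord_eq_some {w w' : WithOne S} {A : SchGroupOf a} (h : coord a w = some A)
    (h' : coord a w' = some A) : w = w' := by
  have hw : w ∈ hClass (a : WithOne S) := by_contra fun hw => by simp [coord_eq_none hw] at h
  have hw' : w' ∈ hClass (a : WithOne S) := by_contra fun hw => by simp [coord_eq_none hw] at h'
  obtain ⟨σ, rfl⟩ := exists_stab_mul_eq hw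
  obtain ⟨τ, rfl⟩ := exists_stab_mul_eq hw'
  rw [coord_eq_some rfl] at h
  rw [coord_eq_some rfl, ← h, Option.some_inj] at h'
  exact (Con.eq _).1 h'.symm a ⟨rfl, rfl⟩

end Coordinates

section Profile

variable {S : Type*} [Semigroup S] {a : S} {F : Type*} [Semigroup F]

noncomputable def profile (θ : SchGroupOf a →ₙ* F) (w : WithOne S) : WithOne S → Option F :=
  fun p => (coord a (w * p)).map θ

theorem profile_mul (θ : SchGroupOf a →ₙ* F) (w v : WithOne S) :
    profile θ (w * v) = profile θ w ∘ (v * ·) := by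
  funext p
  simp only [profile, Function.comp_apply, mul_assoc]

theorem profile_eq_none (θ : SchGroupOf a →ₙ* F) {w p : WithOne S}
    (h : w * p ∉ hClass (a : WithOne S)) : profile θ w p = none := by
  simp only [profile, coord_eq_none h, Option.map_none]

theorem profile_apply_eq_of_mem (θ : SchGroupOf a →ₙ* F) {w w' p₀ p : WithOne S}
    (hL : principalLeftIdeal w = principalLeftIdeal w') (h₀ : w * p₀ ∈ hClass (a : WithOne S))
    (h₀' : w' * p₀ ∈ hClass (a : WithOne S)) (h : profile θ w p₀ = profile θ w' p₀)
    (hp : w * p ∈ hClass (a : WithOne S)) : profile θ w p = profile θ w' p := by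
  obtain ⟨q, hq⟩ := exists_mul_eq_of_mem_hClass h₀ hp
  obtain ⟨u, rfl⟩ := (principalLeftIdeal_eq_iff.1 hL).2
  have hq' : u * w * p₀ * q = u * w * p := by simp only [mul_assoc] at hq ⊢; rw [hq]
  let σ : StabOf a := ⟨q, mem_stabSet_top_iff.2 (image_mul_right_hClass h₀ (hq ▸ hp))⟩
  have hθσ : θ ∘ (· * (σ : SchGroupOf a)) = (· * θ σ) ∘ θ := funext fun A => map_mul θ A σ
  simp only [profile] at h ⊢
  rw [← hq, ← hq', coord_mul h₀ σ, coord_mul h₀' σ, Option.map_map, Option.map_map, hθσ,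
    ← Option.map_map, ← Option.map_map, h]

theorem profile_eq_of_apply_eq (θ : SchGroupOf a →ₙ* F) {w w' p₀ : WithOne S}
    (hL : principalLeftIdeal w = principalLeftIdeal w') (h₀ : w * p₀ ∈ hClass (a : WithOne S))
    (h₀' : w' * p₀ ∈ hClass (a : WithOne S)) (h : profile θ w p₀ = profile θ w' p₀) :
    profile θ w = profile θ w' := by
  funext p
  by_cases hp : w * p ∈ hClass (a : WithOne S)
  · exact profile_apply_eq_of_mem θ hL h₀ h₀' h hp
  by_cases hp' : w' * p ∈ hClass (a : WithOne S)
  · exact (profile_apply_eq_of_mem θ hL.symm h₀' h₀ h.symm hp').symm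
  · rw [profile_eq_none θ hp, profile_eq_none θ hp']

/-- A profile is determined by `K = {p | w p ∈ H_a}`, the ideal `S¹ w` and its value at one
chosen point of `K`, and each of these ranges over a finite set. -/
theorem finite_range_profile (hL : {L : Set S | IsLeftIdeal L}.Finite)
    (hR : {R : Set S | IsRightIdeal R}.Finite) [Finite F] (θ : SchGroupOf a →ₙ* F) :
    (Set.range (profile θ)).Finite := by
  let K : WithOne S → Set (WithOne S) := fun w => {p | w * p ∈ hClass (a : WithOne S)}
  let κ := fun w => (K w, principalLeftIdeal w, profile θ w (Classical.epsilon (· ∈ K w)))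
  have hκ : (Set.range κ).Finite :=
    ((finite_range_setOf_mul_mem_hClass _ (finite_range_principalRightIdeal hR)
      (finite_range_principalLeftIdeal hL)).prod
      ((finite_range_principalLeftIdeal hL).prod Set.finite_univ)).subset
      (Set.range_subset_iff.2 fun w => ⟨⟨w, rfl⟩, ⟨w, rfl⟩, trivial⟩)
  have hfac : Function.FactorsThrough (profile θ) κ := by
    intro w w' h
    simp only [κ, Prod.mk.injEq] at h
    obtain ⟨hK, hLw, h₀⟩ := h
    rcases (K w).eq_empty_or_nonempty with hemp | hne
    · funext p
      have hw : p ∉ K w := hemp ▸ Set.notMem_empty p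
      rw [profile_eq_none θ hw, profile_eq_none θ (hK ▸ hw : p ∉ K w')]
    · have hp₀ := Classical.epsilon_spec hne
      rw [← hK] at h₀
      exact profile_eq_of_apply_eq θ hLw hp₀ (hK ▸ hp₀ : _ ∈ K w') h₀
  rw [← hfac.extend_comp (fun _ => profile θ 1), Set.range_comp]
  exact hκ.image _

end Profile

section Backward

variable {S : Type*} [Semigroup S]

theorem finitelySeparated_of_profile_ne (hL : {L : Set S | IsLeftIdeal L}.Finite)
    (hR : {R : Set S | IsRightIdeal R}.Finite) {a : S} {F : Type*} [Semigroup F] [Finite F]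
    (θ : SchGroupOf a →ₙ* F) {x y : S} (h : profile θ x ≠ profile θ y) :
    FinitelySeparated x y := by
  have : Finite (Set.range (profile θ)) := (finite_range_profile hL hR θ).to_subtype
  let act (f : Set.range (profile θ)) (s : S) : Set.range (profile θ) :=
    ⟨f.1 ∘ ((s : WithOne S) * ·), by
      obtain ⟨w, hw⟩ := f.2
      exact ⟨w * s, by rw [profile_mul, hw]⟩⟩
  refine finitelySeparated_of_rightAction act (fun f s t => ?_) ⟨profile θ 1, 1, rfl⟩ ?_
  · exact Subtype.ext (funext fun p => by simp [act, mul_assoc])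
  · simpa [act, Subtype.ext_iff, ← profile_mul] using h

theorem residuallyFiniteMul_of_schGroupOf (hL : {L : Set S | IsLeftIdeal L}.Finite)
    (hR : {R : Set S | IsRightIdeal R}.Finite) (hΓ : ∀ a : S, ResiduallyFiniteMul (SchGroupOf a)) :
    ResiduallyFiniteMul S := by
  intro x y hxy
  have hx : coord x (x : WithOne S) = some (1 : StabOf x) := coord_eq_some (mul_one _)
  have hne : coord x (x : WithOne S) ≠ coord x y := fun h =>
    hxy (WithOne.coe_injective (eq_of_coord_eq_some hx (h ▸ hx)))
  obtain ⟨F, _, _, θ, hθ⟩ := (hΓ x).exists_option_map_ne hne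
  exact finitelySeparated_of_profile_ne hL hR θ fun h => hθ (by simpa [profile] using congrFun h 1)

end Backward

end GreenIndexPaper

/-- a semigroup with finitely many left and right ideals is residually
finite iff all its Schützenberger groups are residually finite. -/
theorem residually_finite_iff_schGroups
    (S : Type*) [Semigroup S]
    (hL : {L : Set S | IsLeftIdeal L}.Finite) (hR : {R : Set S | IsRightIdeal R}.Finite) :
    ResiduallyFiniteMul S ↔
      ∀ H : Set S, IsHClassIn (⊤ : Subsemigroup S) H →
        ResiduallyFiniteMul (SchGroup (⊤ : Subsemigroup S) H) :=
  ⟨fun hS H _ => hS.schGroup ⊤ H,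
    fun hΓ => residuallyFiniteMul_of_schGroupOf hL hR fun a => hΓ _ ⟨a, rfl⟩⟩
end
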